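/- Fix m ≥ 1 and let ρ_0, ..., ρ_{m−1} : ℝ → ℝ be measurable functions all of whose absolute moments are finite; extend them to an m-periodic sequence of weights by ρ_{j+km}(z) = z^{km} ρ_j(z) for all j = 0, ..., m−1 and k ≥ 0. Set μ_{ij} = ∫_ℝ z^i ρ_j(z) dz and assume D_k = det(μ_{ij})_{0≤i,j≤k−1} ≠ 0 for all k ≥ 1, so the monic determinantal polynomials p_n of degree n are defined for all n. Then for every n ≥ 0 there exist real coefficients c_{n,r}, max(n−m, 0) ≤ r ≤ n+m−1, such that z^m p_n(z) = p_{n+m}(z) + Σ_{r=max(n−m,0)}^{n+m−1} c_{n,r} p_r(z); that is, multiplication by z^m is represented on the p_n's by a 2m+1-band matrix L^m with 1's on its outermost upper diagonal. -/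
import Mathlib


open MeasureTheory Polynomial

/-- The `n × n` moment matrix `(μ i j) = (∫ z^i ρ j z dz)` of a sequence of
weights `ρ 0, ρ 1, ...` on `ℝ`. -/
noncomputable def momentMatrix (ρ : ℕ → ℝ → ℝ) (n : ℕ) : Matrix (Fin n) (Fin n) ℝ :=
  Matrix.of fun i j : Fin n => ∫ z : ℝ, z ^ (i : ℕ) * ρ (j : ℕ) z

/-- The monic determinantal polynomial `p n` of degree `n`: `Dₙ⁻¹` times the
determinant of the bordered `(n+1) × (n+1)` moment matrix whose last column
is `(X^i)`, where `Dₙ = det (μ i j)`. -/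
noncomputable def detPoly (ρ : ℕ → ℝ → ℝ) (n : ℕ) : Polynomial ℝ :=
  C (momentMatrix ρ n).det⁻¹ *
    Matrix.det (Matrix.of fun i j : Fin (n + 1) =>
      if (j : ℕ) < n then C (∫ z : ℝ, z ^ (i : ℕ) * ρ (j : ℕ) z)
      else X ^ (i : ℕ))

namespace BandAux

noncomputable def mu (ρ : ℕ → ℝ → ℝ) (i j : ℕ) : ℝ := ∫ z : ℝ, z ^ i * ρ j z

noncomputable def Phi (ρ : ℕ → ℝ → ℝ) (j : ℕ) : Polynomial ℝ →ₗ[ℝ] ℝ :=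
  Polynomial.lsum fun i => LinearMap.toSpanSingleton ℝ ℝ (mu ρ i j)

lemma Phi_C_mul_X_pow (ρ : ℕ → ℝ → ℝ) (j : ℕ) (a : ℝ) (i : ℕ) :
    Phi ρ j (C a * X ^ i) = a * mu ρ i j := by
  rw [C_mul_X_pow_eq_monomial]
  show ((monomial i a).sum fun k r => (LinearMap.toSpanSingleton ℝ ℝ (mu ρ k j)) r) = _
  simp [Polynomial.sum_monomial_index, LinearMap.toSpanSingleton_apply, smul_eq_mul]

lemma Phi_C_mul (ρ : ℕ → ℝ → ℝ) (j : ℕ) (a : ℝ) (p : Polynomial ℝ) :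
    Phi ρ j (C a * p) = a * Phi ρ j p := by
  rw [← smul_eq_C_mul, LinearMap.map_smul, smul_eq_mul]

noncomputable def minor (ρ : ℕ → ℝ → ℝ) (n : ℕ) (i : Fin (n + 1)) :
    Matrix (Fin n) (Fin n) ℝ :=
  Matrix.of fun i' j' => mu ρ (i.succAbove i') j'

noncomputable def coefA (ρ : ℕ → ℝ → ℝ) (n : ℕ) (i : Fin (n + 1)) : ℝ :=
  (momentMatrix ρ n).det⁻¹ * ((-1) ^ ((i : ℕ) + n) * (minor ρ n i).det)

lemma detPoly_eq (ρ : ℕ → ℝ → ℝ) (n : ℕ) :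
    detPoly ρ n = ∑ i : Fin (n + 1), C (coefA ρ n i) * X ^ (i : ℕ) := by
  rw [detPoly, Matrix.det_succ_column _ (Fin.last n), Finset.mul_sum]
  refine Finset.sum_congr rfl fun i _ => ?_
  have hsub : ((Matrix.of fun i j : Fin (n + 1) =>
      if (j : ℕ) < n then C (∫ z : ℝ, z ^ (i : ℕ) * ρ (j : ℕ) z)
      else X ^ (i : ℕ)).submatrix i.succAbove (Fin.last n).succAbove)
      = (minor ρ n i).map C := by
    ext i' j'
    simp [Matrix.submatrix_apply, Fin.succAbove_last, minor, mu, j'.is_lt]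
  rw [hsub, ← RingHom.mapMatrix_apply, ← RingHom.map_det]
  have hlast : (Matrix.of fun i j : Fin (n + 1) =>
      if (j : ℕ) < n then C (∫ z : ℝ, z ^ (i : ℕ) * ρ (j : ℕ) z)
      else X ^ (i : ℕ)) i (Fin.last n) = X ^ (i : ℕ) := by simp
  rw [hlast, coefA, map_mul, map_mul, map_pow, map_neg, map_one]
  push_cast [Fin.val_last]
  ring

noncomputable def bordered (ρ : ℕ → ℝ → ℝ) (n j : ℕ) : Matrix (Fin (n + 1)) (Fin (n + 1)) ℝ :=
  Matrix.of fun i j' => if (j' : ℕ) < n then mu ρ i j' else mu ρ i j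

lemma Phi_detPoly (ρ : ℕ → ℝ → ℝ) (n j : ℕ) :
    Phi ρ j (detPoly ρ n) = (momentMatrix ρ n).det⁻¹ * (bordered ρ n j).det := by
  rw [detPoly_eq, map_sum, Matrix.det_succ_column (bordered ρ n j) (Fin.last n),
    Finset.mul_sum]
  refine Finset.sum_congr rfl fun i _ => ?_
  rw [Phi_C_mul_X_pow]
  have hsub : ((bordered ρ n j).submatrix i.succAbove (Fin.last n).succAbove)
      = minor ρ n i := by
    ext i' j'
    simp [Matrix.submatrix_apply, Fin.succAbove_last, bordered, minor, j'.is_lt]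
  have hlast : bordered ρ n j i (Fin.last n) = mu ρ i j := by simp [bordered]
  rw [hsub, hlast, coefA, Fin.val_last]
  ring

lemma Phi_detPoly_of_lt (ρ : ℕ → ℝ → ℝ) {n j : ℕ} (hj : j < n) :
    Phi ρ j (detPoly ρ n) = 0 := by
  rw [Phi_detPoly]
  have : (bordered ρ n j).det = 0 := by
    refine Matrix.det_zero_of_column_eq (M := bordered ρ n j)
      (i := ⟨j, by omega⟩) (j := Fin.last n) ?_ ?_
    · intro h
      have := congrArg Fin.val h
      simp [Fin.val_last] at this
      omega
    · intro k
      simp [bordered, hj]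
  rw [this, mul_zero]

lemma bordered_self (ρ : ℕ → ℝ → ℝ) (n : ℕ) :
    bordered ρ n n = momentMatrix ρ (n + 1) := by
  ext i j'
  rcases lt_or_ge (j' : ℕ) n with h | h
  · simp [bordered, momentMatrix, h, mu]
  · have : (j' : ℕ) = n := by omega
    simp [bordered, momentMatrix, this, mu]

lemma Phi_detPoly_self (ρ : ℕ → ℝ → ℝ) (n : ℕ) :
    Phi ρ n (detPoly ρ n) = (momentMatrix ρ n).det⁻¹ * (momentMatrix ρ (n + 1)).det := by
  rw [Phi_detPoly, bordered_self]

lemma minor_last (ρ : ℕ → ℝ → ℝ) (n : ℕ) :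
    minor ρ n (Fin.last n) = momentMatrix ρ n := by
  ext i' j'
  simp [minor, momentMatrix, mu, Fin.succAbove_last]

lemma coeff_detPoly_self (ρ : ℕ → ℝ → ℝ) (n : ℕ)
    (hD : (momentMatrix ρ n).det ≠ 0) : (detPoly ρ n).coeff n = 1 := by
  rw [detPoly_eq, finset_sum_coeff]
  rw [Finset.sum_eq_single (Fin.last n)]
  · simp [coeff_C_mul, coeff_X_pow, coefA, minor_last, Even.neg_one_pow (Even.add_self n),
      inv_mul_cancel₀ hD]
  · intro i _ hi
    have : (i : ℕ) ≠ n := fun h => hi (by ext; simp [h, Fin.val_last])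
    simp [coeff_C_mul, coeff_X_pow, this, Ne.symm this]
  · simp

lemma natDegree_detPoly_le (ρ : ℕ → ℝ → ℝ) (n : ℕ) : (detPoly ρ n).natDegree ≤ n := by
  rw [detPoly_eq]
  refine Polynomial.natDegree_sum_le_of_forall_le _ _ fun i _ => ?_
  refine le_trans (natDegree_C_mul_le _ _) ?_
  simpa [natDegree_X_pow] using Nat.lt_succ_iff.mp i.is_lt

lemma detPoly_monic (ρ : ℕ → ℝ → ℝ) (n : ℕ)
    (hD : (momentMatrix ρ n).det ≠ 0) : (detPoly ρ n).Monic :=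
  Polynomial.monic_of_natDegree_le_of_coeff_eq_one n (natDegree_detPoly_le ρ n)
    (coeff_detPoly_self ρ n hD)

lemma natDegree_detPoly (ρ : ℕ → ℝ → ℝ) (n : ℕ)
    (hD : (momentMatrix ρ n).det ≠ 0) : (detPoly ρ n).natDegree = n :=
  le_antisymm (natDegree_detPoly_le ρ n)
    (le_natDegree_of_ne_zero (by rw [coeff_detPoly_self ρ n hD]; exact one_ne_zero))

lemma mu_shift (ρ : ℕ → ℝ → ℝ) {m : ℕ}
    (hstep : ∀ j z, ρ (j + m) z = z ^ m * ρ j z) (i j : ℕ) :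
    mu ρ i (j + m) = mu ρ (i + m) j := by
  have : (fun z : ℝ => z ^ i * ρ (j + m) z) = fun z : ℝ => z ^ (i + m) * ρ j z := by
    funext z
    rw [hstep j z, pow_add]
    ring
  rw [mu, mu, this]

lemma Phi_X_pow_mul (ρ : ℕ → ℝ → ℝ) {m : ℕ}
    (hstep : ∀ j z, ρ (j + m) z = z ^ m * ρ j z) (j : ℕ) (p : Polynomial ℝ) :
    Phi ρ j (X ^ m * p) = Phi ρ (j + m) p := by
  induction p using Polynomial.induction_on' with
  | add p q hp hq => rw [mul_add, map_add, map_add, hp, hq]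
  | monomial k a =>
    rw [← C_mul_X_pow_eq_monomial,
      show (X : Polynomial ℝ) ^ m * (C a * X ^ k) = C a * X ^ (k + m) by ring,
      Phi_C_mul_X_pow, Phi_C_mul_X_pow, mu_shift ρ hstep]

lemma span_detPoly (ρ : ℕ → ℝ → ℝ)
    (hD : ∀ k : ℕ, (momentMatrix ρ k).det ≠ 0) :
    ∀ N : ℕ, ∀ q : Polynomial ℝ, q.natDegree ≤ N →
      ∃ d : ℕ → ℝ, q = ∑ r ∈ Finset.range (N + 1), C (d r) * detPoly ρ r := by
  intro N
  induction N with
  | zero =>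
    intro q hq
    refine ⟨fun _ => q.coeff 0, ?_⟩
    have h0 : detPoly ρ 0 = 1 :=
      (Polynomial.Monic.natDegree_eq_zero (detPoly_monic ρ 0 (hD 0))).mp
        (natDegree_detPoly ρ 0 (hD 0))
    rw [Finset.sum_range_one, h0, mul_one]
    exact Polynomial.eq_C_of_natDegree_le_zero hq
  | succ N ih =>
    intro q hq
    set a := q.coeff (N + 1) with ha
    have hq' : (q - C a * detPoly ρ (N + 1)).natDegree ≤ N := by
      refine Polynomial.natDegree_le_iff_coeff_eq_zero.mpr fun k hk => ?_
      rcases eq_or_lt_of_le (Nat.succ_le_of_lt hk) with h | h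
      · rw [coeff_sub, coeff_C_mul, ← h, ← ha,
          show (detPoly ρ (N + 1)).coeff (N + 1) = 1 from coeff_detPoly_self ρ (N + 1) (hD _),
          mul_one, sub_self]
      · rw [coeff_sub, coeff_C_mul,
          Polynomial.coeff_eq_zero_of_natDegree_lt (lt_of_le_of_lt hq h),
          Polynomial.coeff_eq_zero_of_natDegree_lt
            (lt_of_le_of_lt (natDegree_detPoly_le ρ (N + 1)) h),
          mul_zero, sub_zero]
    obtain ⟨d, hd⟩ := ih _ hq'
    refine ⟨fun r => if r = N + 1 then a else d r, ?_⟩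
    rw [Finset.sum_range_succ]
    simp only [if_true]
    have : ∑ r ∈ Finset.range (N + 1), C (if r = N + 1 then a else d r) * detPoly ρ r
        = ∑ r ∈ Finset.range (N + 1), C (d r) * detPoly ρ r := by
      refine Finset.sum_congr rfl fun r hr => ?_
      have : r ≠ N + 1 := by have := Finset.mem_range.mp hr; omega
      rw [if_neg this]
    rw [this, ← hd]
    ring

end BandAux

open BandAux in
/-- for an `m`-periodic sequence of weights
(`ρ (j + k*m) z = z^{k*m} * ρ j z` for `j < m`, `k ≥ 0`), with all moments finite
and all moment determinants nonzero, multiplication by `z^m` acts on the monic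
determinantal polynomials as a `2m+1`-band matrix with `1`'s on the outermost
upper diagonal:
`X^m * p n = p (n+m) + ∑_{max (n-m) 0 ≤ r ≤ n+m-1} c r • p r`. -/
theorem periodic_weights_band_recursion
    (m : ℕ) (hm : 1 ≤ m) (ρ : ℕ → ℝ → ℝ)
    (hmeas : ∀ j, Measurable (ρ j))
    (hper : ∀ j k : ℕ, j < m → ∀ z : ℝ, ρ (j + k * m) z = z ^ (k * m) * ρ j z)
    (hint : ∀ i j : ℕ, Integrable (fun z : ℝ => z ^ i * ρ j z))
    (hD : ∀ k : ℕ, 1 ≤ k → (momentMatrix ρ k).det ≠ 0)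
    (n : ℕ) :
    ∃ c : ℕ → ℝ,
      X ^ m * detPoly ρ n
        = detPoly ρ (n + m)
            + ∑ r ∈ Finset.Ico (n - m) (n + m), C (c r) * detPoly ρ r := by
  have hD' : ∀ k : ℕ, (momentMatrix ρ k).det ≠ 0 := by
    intro k
    rcases Nat.eq_zero_or_pos k with rfl | hk
    · simp [Matrix.det_fin_zero]
    · exact hD k hk
  have hstep : ∀ j z, ρ (j + m) z = z ^ m * ρ j z := by
    intro j z
    have hjm : j % m < m := Nat.mod_lt _ hm
    have h1 := hper (j % m) (j / m) hjm z
    have h2 := hper (j % m) (j / m + 1) hjm z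
    rw [Nat.mod_add_div' j m] at h1
    rw [show j % m + (j / m + 1) * m = j + m by
      rw [add_mul, one_mul, ← add_assoc, Nat.mod_add_div']] at h2
    rw [h2, h1, add_mul, one_mul, pow_add]
    ring
  have hmono : ∀ k, (detPoly ρ k).Monic := fun k => detPoly_monic ρ k (hD' k)
  have hdeg : ∀ k, (detPoly ρ k).natDegree = k := fun k => natDegree_detPoly ρ k (hD' k)
  set q := X ^ m * detPoly ρ n - detPoly ρ (n + m) with hqdef
  have hXm : (X ^ m * detPoly ρ n).Monic := (monic_X_pow m).mul (hmono n)
  have hXmdeg : (X ^ m * detPoly ρ n).natDegree = n + m := by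
    rw [(monic_X_pow m).natDegree_mul (hmono n), natDegree_X_pow, hdeg, add_comm]
  have hq : q.natDegree ≤ n + m - 1 := by
    refine Polynomial.natDegree_le_iff_coeff_eq_zero.mpr fun k hk => ?_
    have hk1 : n + m ≤ k := by omega
    rcases eq_or_lt_of_le hk1 with h | h
    · rw [hqdef, coeff_sub, ← h]
      have e1 : (X ^ m * detPoly ρ n).coeff (n + m) = 1 := by
        have := hXm.coeff_natDegree
        rwa [hXmdeg] at this
      have e2 : (detPoly ρ (n + m)).coeff (n + m) = 1 := by
        have := (hmono (n + m)).coeff_natDegree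
        rwa [hdeg] at this
      rw [e1, e2, sub_self]
    · rw [hqdef, coeff_sub,
        Polynomial.coeff_eq_zero_of_natDegree_lt (by rw [hXmdeg]; exact h),
        Polynomial.coeff_eq_zero_of_natDegree_lt (by rw [hdeg]; exact h), sub_zero]
  obtain ⟨d, hd⟩ := span_detPoly ρ hD' (n + m - 1) q hq
  rw [show n + m - 1 + 1 = n + m by omega] at hd
  have hzero : ∀ j, j < n - m → d j = 0 := by
    intro j
    induction j using Nat.strong_induction_on with
    | _ j ih =>
      intro hj
      have h1 : Phi ρ j q = 0 := by
        rw [hqdef, map_sub, Phi_X_pow_mul ρ hstep,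
          Phi_detPoly_of_lt ρ (show j + m < n by omega),
          Phi_detPoly_of_lt ρ (show j < n + m by omega), sub_zero]
      rw [hd, map_sum, Finset.sum_eq_single j ?_ ?_] at h1
      · rw [Phi_C_mul, Phi_detPoly_self] at h1
        rcases mul_eq_zero.mp h1 with h | h
        · exact h
        · exact absurd h (mul_ne_zero (inv_ne_zero (hD' j)) (hD' (j + 1)))
      · intro r _ hr
        rcases lt_or_gt_of_ne hr with hlt | hgt
        · rw [ih r hlt (by omega)]
          simp
        · rw [Phi_C_mul, Phi_detPoly_of_lt ρ hgt, mul_zero]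
      · intro hjmem
        exact absurd (Finset.mem_range.mpr (by omega)) hjmem
  have hmain : X ^ m * detPoly ρ n
      = detPoly ρ (n + m) + ∑ r ∈ Finset.range (n + m), C (d r) * detPoly ρ r := by
    rw [← hd, hqdef]
    ring
  refine ⟨d, ?_⟩
  rw [hmain]
  congr 1
  rw [Finset.range_eq_Ico,
    ← Finset.sum_Ico_consecutive _ (Nat.zero_le (n - m)) (show n - m ≤ n + m by omega)]
  have h0 : ∑ r ∈ Finset.Ico 0 (n - m), C (d r) * detPoly ρ r = 0 :=
    Finset.sum_eq_zero fun r hr => by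
      rw [hzero r (Finset.mem_Ico.mp hr).2]
      simp
  rw [h0, zero_add]
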